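/- Let W = [[β, -α], [-αᵀ, γ]] be a 2n×2n real symmetric positive definite symplectic matrix and let T = [[β^{-1/2}, 0], [β^{-1/2}α, β^{1/2}]], where β^{1/2} is the positive definite symmetric square root of β. Then T is symplectic and W = T⁻¹T⁻ᵀ. -/

import Mathlib

open Matrix Polynomial

noncomputable def J (n : ℕ) : Matrix (Fin n ⊕ Fin n) (Fin n ⊕ Fin n) ℝ :=
  Matrix.fromBlocks 0 1 (-1) 0

/-! With β = s², the symplectic condition W J W = J on the symmetric W says αβ = βαᵀ and
βγ = 1 + α². These make T W = [[s, -s⁻¹α], [0, s⁻¹]], and then T W Tᵀ = 1 because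
s αᵀ s⁻¹ = s⁻¹ α s; the same commutation (β⁻¹α = αᵀβ⁻¹) is what makes T symplectic. -/

lemma fromBlocks_mul_J_mul_fromBlocks {n : ℕ} (β α γ : Matrix (Fin n) (Fin n) ℝ) :
    fromBlocks β (-α) (-αᵀ) γ * J n * fromBlocks β (-α) (-αᵀ) γ =
      fromBlocks (α * β - β * αᵀ) (β * γ - α * α) (αᵀ * αᵀ - γ * β) (γ * α - αᵀ * γ) := by
  -- `open Matrix` also brings `Matrix.J`, with the opposite sign convention, into scope.
  simp only [_root_.J, fromBlocks_multiply]
  congr 1 <;> simp [sub_eq_add_neg] <;> abel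

lemma relations_of_fromBlocks_mul_J_mul_eq_J {n : ℕ} {β α γ : Matrix (Fin n) (Fin n) ℝ}
    (h : fromBlocks β (-α) (-αᵀ) γ * J n * fromBlocks β (-α) (-αᵀ) γ = J n) :
    α * β = β * αᵀ ∧ β * γ = 1 + α * α := by
  rw [fromBlocks_mul_J_mul_fromBlocks, _root_.J, fromBlocks_inj] at h
  exact ⟨sub_eq_zero.mp h.1, sub_eq_iff_eq_add.mp h.2.1⟩

lemma fromBlocks_zero₁₂_transpose_mul_J_mul {n : ℕ} {A C D : Matrix (Fin n) (Fin n) ℝ}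
    (hAD : Aᵀ * D = 1) (hAC : Aᵀ * C = Cᵀ * A) :
    (fromBlocks A 0 C D)ᵀ * J n * fromBlocks A 0 C D = J n := by
  have hDA : Dᵀ * A = 1 := by simpa [Matrix.transpose_mul] using congrArg transpose hAD
  simp only [_root_.J, fromBlocks_transpose, fromBlocks_multiply]
  congr 1 <;> simp [hAD, hDA, hAC]

section

variable {m R : Type*} [Fintype m] [DecidableEq m] [CommRing R]

lemma inv_mul_comm_of_mul_comm_transpose {α β : Matrix m m R} [Invertible β]
    (h : α * β = β * αᵀ) : β⁻¹ * α = αᵀ * β⁻¹ := by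
  calc β⁻¹ * α = β⁻¹ * (α * β) * β⁻¹ := by simp [Matrix.mul_assoc]
    _ = αᵀ * β⁻¹ := by simp [h]

lemma eq_inv_mul_inv_transpose_of_mul_mul_transpose_eq_one {T W : Matrix m m R}
    (h : T * W * Tᵀ = 1) : W = T⁻¹ * T⁻¹ᵀ := by
  have hTt : IsUnit Tᵀ.det := isUnit_det_of_left_inverse h
  have hWT : W * Tᵀ = T⁻¹ := (inv_eq_right_inv (by rwa [← Matrix.mul_assoc])).symm
  rw [transpose_nonsing_inv, ← hWT, Matrix.mul_assoc, mul_nonsing_inv _ hTt, Matrix.mul_one]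

variable {s α γ : Matrix m m R} [Invertible s]

lemma inv_mul_inv_mul_comm (h : α * (s * s) = s * s * αᵀ) :
    s⁻¹ * s⁻¹ * α = αᵀ * s⁻¹ * s⁻¹ := by
  have := invertibleMul s s
  simpa [Matrix.mul_inv_rev, Matrix.mul_assoc] using inv_mul_comm_of_mul_comm_transpose h

lemma fromBlocks_inv_zero_mul_fromBlocks (hαβ : α * (s * s) = s * s * αᵀ)
    (hβγ : s * s * γ = 1 + α * α) :
    fromBlocks s⁻¹ 0 (s⁻¹ * α) s * fromBlocks (s * s) (-α) (-αᵀ) γ =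
      fromBlocks s (-(s⁻¹ * α)) 0 s⁻¹ := by
  have hsγ : s * γ = s⁻¹ * (1 + α * α) := by
    rw [← hβγ, Matrix.mul_assoc, inv_mul_cancel_left_of_invertible]
  have hsα : s⁻¹ * α * (s * s) = s * αᵀ := by
    rw [Matrix.mul_assoc, hαβ, Matrix.mul_assoc, inv_mul_cancel_left_of_invertible]
  rw [fromBlocks_multiply]
  congr 1
  · simp [← Matrix.mul_assoc]
  · simp
  · simp [hsα]
  · simp [hsγ, Matrix.mul_add, Matrix.mul_assoc]

lemma fromBlocks_mul_transpose_fromBlocks_inv_zero (hs : sᵀ = s)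
    (hαβ : α * (s * s) = s * s * αᵀ) :
    fromBlocks s (-(s⁻¹ * α)) 0 s⁻¹ * (fromBlocks s⁻¹ 0 (s⁻¹ * α) s)ᵀ = 1 := by
  have hsα : s * αᵀ * s⁻¹ = s⁻¹ * α * s := by
    calc s * αᵀ * s⁻¹ = s * (αᵀ * s⁻¹ * s⁻¹) * s := by simp [Matrix.mul_assoc]
      _ = s⁻¹ * α * s := by simp [← inv_mul_inv_mul_comm hαβ, Matrix.mul_assoc]
  rw [fromBlocks_transpose, fromBlocks_multiply, ← fromBlocks_one]
  congr 1
  · simp [transpose_nonsing_inv, hs]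
  · simp [hs, Matrix.transpose_mul, transpose_nonsing_inv, ← Matrix.mul_assoc, hsα]
  · simp
  · simp [hs]

end

theorem stmt14_general {n : ℕ} (β α γ s : Matrix (Fin n) (Fin n) ℝ)
    (W : Matrix (Fin n ⊕ Fin n) (Fin n ⊕ Fin n) ℝ)
    (hW : W = Matrix.fromBlocks β (-α) (-αᵀ) γ)
    (hsymm : W.IsSymm) (hsp : Wᵀ * J n * W = J n)
    (hs : s.PosDef) (hss : s.IsSymm) (hsq : s * s = β) :
    (Matrix.fromBlocks s⁻¹ 0 (s⁻¹ * α) s)ᵀ * J n * (Matrix.fromBlocks s⁻¹ 0 (s⁻¹ * α) s) = J n ∧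
    W = (Matrix.fromBlocks s⁻¹ 0 (s⁻¹ * α) s)⁻¹ * ((Matrix.fromBlocks s⁻¹ 0 (s⁻¹ * α) s)⁻¹)ᵀ := by
  have := hs.isUnit.invertible
  rw [hsymm.eq, hW] at hsp
  obtain ⟨hαβ, hβγ⟩ := relations_of_fromBlocks_mul_J_mul_eq_J hsp
  subst hW hsq
  constructor
  · apply fromBlocks_zero₁₂_transpose_mul_J_mul
    · simp [transpose_nonsing_inv, hss.eq]
    · simp [transpose_nonsing_inv, hss.eq, Matrix.transpose_mul, ← Matrix.mul_assoc,
        inv_mul_inv_mul_comm hαβ]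
  · apply eq_inv_mul_inv_transpose_of_mul_mul_transpose_eq_one
    rw [fromBlocks_inv_zero_mul_fromBlocks hαβ hβγ,
      fromBlocks_mul_transpose_fromBlocks_inv_zero hss.eq hαβ]

theorem stmt14 {n : ℕ} (β α γ s : Matrix (Fin n) (Fin n) ℝ)
    (W : Matrix (Fin n ⊕ Fin n) (Fin n ⊕ Fin n) ℝ)
    (hW : W = Matrix.fromBlocks β (-α) (-αᵀ) γ)
    (hsymm : W.IsSymm) (hpd : W.PosDef) (hsp : Wᵀ * J n * W = J n)
    (hs : s.PosDef) (hss : s.IsSymm) (hsq : s * s = β) :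
    (Matrix.fromBlocks s⁻¹ 0 (s⁻¹ * α) s)ᵀ * J n * (Matrix.fromBlocks s⁻¹ 0 (s⁻¹ * α) s) = J n ∧
    W = (Matrix.fromBlocks s⁻¹ 0 (s⁻¹ * α) s)⁻¹ * ((Matrix.fromBlocks s⁻¹ 0 (s⁻¹ * α) s)⁻¹)ᵀ :=
  stmt14_general β α γ s W hW hsymm hsp hs hss hsq
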